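/- arXiv:2110.08846 — 3 statements merged into one kernel-verified Lean document; each statement's English description precedes it below -/
import Mathlib

section
/- Let φ : (0,∞) → (0,∞) be increasing and suppose that ψ(r) := r²/φ(r)² is increasing in r > 0. Let K > 0 and γ > 0, and suppose r₀ > 0 satisfies ψ(r₀) = 2Kγ. Then for every r > 0, K·φ(r)²/γ − r²/(2γ²) ≤ K·φ(r₀)²/γ. (Consequently, sup_{r>0} { K·φ(r)²/γ − r²/(2γ²) } ≤ K·(φ∘ψ⁻¹)²(2Kγ)/γ.) -/
/-! With `c := ψ(r₀) = 2Kγ`, the claim is `c·φ(r)² − r² ≤ c·φ(r₀)²` divided by `2γ²`.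
For `r ≤ r₀` this follows from `φ(r) ≤ φ(r₀)`; for `r ≥ r₀` we have `c ≤ ψ(r)`, i.e.
`c·φ(r)² ≤ r²`, so the left-hand side is nonpositive. -/

theorem sq_div_sq_mul_sq_sub_sq_le {φ : ℝ → ℝ} (hφpos : ∀ r > 0, 0 < φ r)
    (hφmono : MonotoneOn φ (Set.Ioi 0))
    (hψmono : MonotoneOn (fun r => r ^ 2 / φ r ^ 2) (Set.Ioi 0))
    {r₀ r : ℝ} (hr₀ : 0 < r₀) (hr : 0 < r) :
    r₀ ^ 2 / φ r₀ ^ 2 * φ r ^ 2 - r ^ 2 ≤ r₀ ^ 2 / φ r₀ ^ 2 * φ r₀ ^ 2 := by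
  rcases le_total r r₀ with hle | hge
  · have hφle : φ r ^ 2 ≤ φ r₀ ^ 2 :=
      pow_le_pow_left₀ (hφpos r hr).le (hφmono hr hr₀ hle) 2
    nlinarith [mul_le_mul_of_nonneg_left hφle (by positivity : 0 ≤ r₀ ^ 2 / φ r₀ ^ 2)]
  · have hψle : r₀ ^ 2 / φ r₀ ^ 2 ≤ r ^ 2 / φ r ^ 2 := hψmono hr₀ hr hge
    have hφr : 0 < φ r ^ 2 := by positivity [hφpos r hr]
    have : r₀ ^ 2 / φ r₀ ^ 2 * φ r ^ 2 ≤ r ^ 2 := (le_div_iff₀ hφr).mp hψle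
    nlinarith [(by positivity : 0 ≤ r₀ ^ 2 / φ r₀ ^ 2 * φ r₀ ^ 2)]

theorem stmt0_general (φ : ℝ → ℝ) (hφpos : ∀ r > 0, 0 < φ r)
    (hφmono : MonotoneOn φ (Set.Ioi 0))
    (hψmono : MonotoneOn (fun r => r ^ 2 / (φ r) ^ 2) (Set.Ioi 0))
    (K γ r₀ : ℝ) (hγ : 0 < γ) (hr₀ : 0 < r₀)
    (hψr₀ : r₀ ^ 2 / (φ r₀) ^ 2 = 2 * K * γ) :
    ∀ r > 0, K * (φ r) ^ 2 / γ - r ^ 2 / (2 * γ ^ 2) ≤ K * (φ r₀) ^ 2 / γ := by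
  intro r hr
  have key := sq_div_sq_mul_sq_sub_sq_le hφpos hφmono hψmono hr₀ hr
  rw [hψr₀] at key
  calc K * φ r ^ 2 / γ - r ^ 2 / (2 * γ ^ 2)
      = (2 * K * γ * φ r ^ 2 - r ^ 2) / (2 * γ ^ 2) := by field_simp
    _ ≤ 2 * K * γ * φ r₀ ^ 2 / (2 * γ ^ 2) := by gcongr
    _ = K * φ r₀ ^ 2 / γ := by field_simp

/-- If `φ : (0,∞) → (0,∞)` is increasing, `ψ(r) := r²/φ(r)²` is increasing on `(0,∞)`,
`K, γ > 0` and `r₀ > 0` satisfies `ψ(r₀) = 2Kγ`, then for every `r > 0`,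
`K·φ(r)²/γ − r²/(2γ²) ≤ K·φ(r₀)²/γ`. -/
theorem stmt0 (φ : ℝ → ℝ) (hφpos : ∀ r > 0, 0 < φ r)
    (hφmono : MonotoneOn φ (Set.Ioi 0))
    (hψmono : MonotoneOn (fun r => r ^ 2 / (φ r) ^ 2) (Set.Ioi 0))
    (K γ r₀ : ℝ) (hK : 0 < K) (hγ : 0 < γ) (hr₀ : 0 < r₀)
    (hψr₀ : r₀ ^ 2 / (φ r₀) ^ 2 = 2 * K * γ) :
    ∀ r > 0, K * (φ r) ^ 2 / γ - r ^ 2 / (2 * γ ^ 2) ≤ K * (φ r₀) ^ 2 / γ :=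
  stmt0_general φ hφpos hφmono hψmono K γ r₀ hγ hr₀ hψr₀
end

section
/- Let φ : (0,∞) → (0,∞) be increasing and suppose ψ(r) := r²/φ(r)² is a strictly increasing continuous bijection of (0,∞) onto (0,∞), with inverse ψ⁻¹. Assume the improper integral ∫₀¹ (φ(ψ⁻¹(s)))²/s ds is finite. Fix K > 0 and T > 0, and for t ∈ (0,T] define γ_t(s) = (1 − e^{K(s−t)})/K for s ∈ [0,t]. Then sup_{t∈(0,T]} ∫₀ᵗ (φ(ψ⁻¹(2K·γ_t(s))))²/γ_t(s) ds < ∞. -/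
/-!
Write `G := (φ ∘ ψ⁻¹)²`, which is monotone because `φ` and `ψ⁻¹` are. Since
`e^{-KT}(t - s) ≤ γ_t(s) ≤ t - s`, monotonicity of `G` bounds the integrand by
`e^{KT} G(2K(t - s))/(t - s)`, and the substitution `u = 2K(t - s)` bounds its integral by
`e^{KT} ∫₀^{2KT} G(u)/u du`, which is independent of `t`. That integral is finite: on `(0, 1]` by
the Dini condition, and on `[1, 2KT]` because `G(u)/u ≤ G(2KT)` there.
-/

open MeasureTheory Set Real
open scoped ENNReal

lemma StrictMonoOn.monotoneOn_of_leftInvOn {α β : Type*} [LinearOrder α] [Preorder β]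
    {f : α → β} {g : β → α} {s : Set α} {t : Set β} (hf : StrictMonoOn f s)
    (hg : MapsTo g t s) (hfg : LeftInvOn f g t) : MonotoneOn g t := by
  intro a ha b hb hab
  by_contra! hlt
  have := hf (hg hb) (hg ha) hlt
  rw [hfg ha, hfg hb] at this
  exact this.not_ge hab

lemma setLIntegral_Ioc_div_lt_top {G : ℝ → ℝ} (hG : MonotoneOn G (Ioi 0))
    (hG0 : ∀ v, 0 ≤ G v) (h1 : ∫⁻ v in Ioc 0 1, ENNReal.ofReal (G v / v) < ∞) (M : ℝ) :
    ∫⁻ v in Ioc 0 M, ENNReal.ofReal (G v / v) < ∞ := by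
  have hbound : ∀ v ∈ Ioc 1 M, ENNReal.ofReal (G v / v) ≤ ENNReal.ofReal (G M) := fun v hv =>
    ENNReal.ofReal_le_ofReal <| (div_le_self (hG0 v) hv.1.le).trans <|
      hG (zero_lt_one.trans hv.1) (zero_lt_one.trans (hv.1.trans_le hv.2)) hv.2
  calc ∫⁻ v in Ioc 0 M, ENNReal.ofReal (G v / v)
      ≤ ∫⁻ v in Ioc 0 1 ∪ Ioc 1 M, ENNReal.ofReal (G v / v) :=
        lintegral_mono_set fun v hv => (le_or_gt v 1).imp (⟨hv.1, ·⟩) (⟨·, hv.2⟩)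
    _ ≤ (∫⁻ v in Ioc 0 1, ENNReal.ofReal (G v / v)) +
          ∫⁻ _ in Ioc 1 M, ENNReal.ofReal (G M) :=
        (lintegral_union_le _ _ _).trans
          (add_le_add le_rfl (setLIntegral_mono' measurableSet_Ioc hbound))
    _ < ∞ := by
        rw [setLIntegral_const, Real.volume_Ioc]
        exact ENNReal.add_lt_top.2
          ⟨h1, ENNReal.mul_lt_top ENNReal.ofReal_lt_top ENNReal.ofReal_lt_top⟩

lemma setLIntegral_Ioc_comp_mul_sub {c : ℝ} (hc : 0 < c) (t : ℝ) (f : ℝ → ℝ≥0∞) :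
    ∫⁻ s in Ioc 0 t, ENNReal.ofReal c * f (c * (t - s)) = ∫⁻ v in Ioc 0 (c * t), f v := by
  have himage : (fun s => c * (t - s)) '' Ioc 0 t = Ico 0 (c * t) := by
    rw [show (fun s => c * (t - s)) = (c * ·) ∘ (t - ·) from rfl, image_comp,
      image_const_sub_Ioc, sub_self, sub_zero, image_mul_left_Ico hc, mul_zero]
  have hderiv : ∀ s ∈ Ioc 0 t, HasDerivWithinAt (fun s => c * (t - s)) (-c) (Ioc 0 t) s :=
    fun s _ => by simpa using ((hasDerivAt_id s).const_sub t).const_mul c |>.hasDerivWithinAt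
  have hinj : InjOn (fun s => c * (t - s)) (Ioc 0 t) :=
    fun x _ y _ hxy => by simpa [hc.ne'] using hxy
  rw [← setLIntegral_congr (f := f) Ico_ae_eq_Ioc, ← himage,
    lintegral_image_eq_lintegral_abs_deriv_mul measurableSet_Ioc hderiv hinj, abs_neg,
    abs_of_pos hc]

lemma one_sub_exp_neg_le (y : ℝ) : 1 - exp (-y) ≤ y := by
  linarith [one_sub_le_exp_neg y]

lemma mul_exp_neg_le_one_sub_exp_neg (y : ℝ) : y * exp (-y) ≤ 1 - exp (-y) := by
  have := mul_le_mul_of_nonneg_right (add_one_le_exp y) (exp_pos (-y)).le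
  rw [← exp_add, add_neg_cancel, exp_zero] at this
  linarith

noncomputable def γ (K t s : ℝ) : ℝ := (1 - exp (K * (s - t))) / K

lemma γ_le_sub {K : ℝ} (hK : 0 < K) (t s : ℝ) : γ K t s ≤ t - s := by
  rw [γ, div_le_iff₀ hK, show K * (s - t) = -(K * (t - s)) by ring]
  linarith [one_sub_exp_neg_le (K * (t - s))]

lemma exp_neg_mul_mul_sub_le_γ {K T t s : ℝ} (hK : 0 < K) (hst : s ≤ t) (hts : t - s ≤ T) :
    exp (-(K * T)) * (t - s) ≤ γ K t s := by
  have hexp : exp (-(K * T)) ≤ exp (-(K * (t - s))) := by gcongr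
  rw [γ, le_div_iff₀ hK, show K * (s - t) = -(K * (t - s)) by ring]
  calc exp (-(K * T)) * (t - s) * K ≤ K * (t - s) * exp (-(K * (t - s))) := by
        nlinarith [mul_le_mul_of_nonneg_right hexp (mul_nonneg hK.le (sub_nonneg.2 hst))]
    _ ≤ 1 - exp (-(K * (t - s))) := mul_exp_neg_le_one_sub_exp_neg _

lemma div_γ_le {G : ℝ → ℝ} (hG : MonotoneOn G (Ioi 0)) (hG0 : ∀ v, 0 ≤ G v)
    {K T t s : ℝ} (hK : 0 < K) (hst : s ≤ t) (hts : t - s ≤ T) :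
    G (2 * K * γ K t s) / γ K t s ≤
      exp (K * T) * (2 * K * (G (2 * K * (t - s)) / (2 * K * (t - s)))) := by
  rcases hst.eq_or_lt with rfl | hst
  · simp [γ]
  have hlower := exp_neg_mul_mul_sub_le_γ hK hst.le hts
  have hγ : 0 < γ K t s := (mul_pos (exp_pos _) (sub_pos.2 hst)).trans_le hlower
  calc G (2 * K * γ K t s) / γ K t s ≤ G (2 * K * (t - s)) / γ K t s := by
        gcongr
        have hγ_le := γ_le_sub hK t s
        exact hG (mem_Ioi.2 (by positivity)) (mem_Ioi.2 (by nlinarith)) (by gcongr)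
    _ ≤ G (2 * K * (t - s)) / (exp (-(K * T)) * (t - s)) := by
        have := sub_pos.2 hst
        gcongr
        exact hG0 _
    _ = exp (K * T) * (2 * K * (G (2 * K * (t - s)) / (2 * K * (t - s)))) := by
        rw [exp_neg]
        field_simp [(sub_pos.2 hst).ne']

theorem stmt3_general (φ ψinv : ℝ → ℝ)
    (hφpos : ∀ r > 0, 0 < φ r) (hφmono : MonotoneOn φ (Set.Ioi 0))
    (hψmono : StrictMonoOn (fun r => r ^ 2 / (φ r) ^ 2) (Set.Ioi 0))
    (hinv2 : ∀ s > 0, (ψinv s) ^ 2 / (φ (ψinv s)) ^ 2 = s)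
    (hinvpos : ∀ s > 0, 0 < ψinv s)
    (hint : ∫⁻ s in Set.Ioc (0 : ℝ) 1, ENNReal.ofReal ((φ (ψinv s)) ^ 2 / s) < ⊤)
    (K T : ℝ) (hK : 0 < K) :
    ∃ C : ℝ, ∀ t ∈ Set.Ioc (0 : ℝ) T,
      ∫⁻ s in Set.Ioc (0 : ℝ) t,
        ENNReal.ofReal
          ((φ (ψinv (2 * K * ((1 - Real.exp (K * (s - t))) / K)))) ^ 2 /
            ((1 - Real.exp (K * (s - t))) / K)) ≤ ENNReal.ofReal C := by
  set G : ℝ → ℝ := fun v => φ (ψinv v) ^ 2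
  have hψinv : MonotoneOn ψinv (Ioi 0) := hψmono.monotoneOn_of_leftInvOn hinvpos hinv2
  have hG : MonotoneOn G (Ioi 0) := fun a ha b hb hab =>
    pow_le_pow_left₀ (hφpos _ (hinvpos a ha)).le
      (hφmono (hinvpos a ha) (hinvpos b hb) (hψinv ha hb hab)) 2
  have hG0 : ∀ v, 0 ≤ G v := fun v => sq_nonneg _
  set I := ∫⁻ v in Ioc 0 (2 * K * T), ENNReal.ofReal (G v / v)
  have hI : I < ∞ := setLIntegral_Ioc_div_lt_top hG hG0 hint _
  refine ⟨(ENNReal.ofReal (exp (K * T)) * I).toReal, fun t ht => ?_⟩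
  rw [ENNReal.ofReal_toReal (ENNReal.mul_ne_top ENNReal.ofReal_ne_top hI.ne)]
  calc ∫⁻ s in Ioc 0 t, ENNReal.ofReal (G (2 * K * γ K t s) / γ K t s)
      ≤ ∫⁻ s in Ioc 0 t, ENNReal.ofReal (exp (K * T)) *
          (ENNReal.ofReal (2 * K) * ENNReal.ofReal (G (2 * K * (t - s)) / (2 * K * (t - s)))) := by
        refine setLIntegral_mono' measurableSet_Ioc fun s hs => ?_
        rw [← ENNReal.ofReal_mul (by positivity), ← ENNReal.ofReal_mul (exp_pos _).le]
        exact ENNReal.ofReal_le_ofReal (div_γ_le hG hG0 hK hs.2 (by linarith [hs.1, ht.2]))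
    _ = ENNReal.ofReal (exp (K * T)) * ∫⁻ v in Ioc 0 (2 * K * t), ENNReal.ofReal (G v / v) := by
        rw [lintegral_const_mul' _ _ ENNReal.ofReal_ne_top,
          setLIntegral_Ioc_comp_mul_sub (by positivity) t fun v => ENNReal.ofReal (G v / v)]
    _ ≤ ENNReal.ofReal (exp (K * T)) * I := by
        gcongr
        exact lintegral_mono_set (Ioc_subset_Ioc_right (by nlinarith [ht.2]))

/-- Let `φ : (0,∞) → (0,∞)` be increasing, `ψ(r) := r²/φ(r)²` a strictly increasing continuous
bijection of `(0,∞)` onto itself with inverse `ψinv`, and assume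
`∫₀¹ (φ(ψ⁻¹ s))²/s ds < ∞`. Then, with `γ_t(s) = (1 − e^{K(s−t)})/K`,
`sup_{t ∈ (0,T]} ∫₀ᵗ (φ(ψ⁻¹(2Kγ_t(s))))²/γ_t(s) ds < ∞`. -/
theorem stmt3 (φ ψinv : ℝ → ℝ)
    (hφpos : ∀ r > 0, 0 < φ r) (hφmono : MonotoneOn φ (Set.Ioi 0))
    (hψmono : StrictMonoOn (fun r => r ^ 2 / (φ r) ^ 2) (Set.Ioi 0))
    (hψcont : ContinuousOn (fun r => r ^ 2 / (φ r) ^ 2) (Set.Ioi 0))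
    (hψbij : Set.BijOn (fun r => r ^ 2 / (φ r) ^ 2) (Set.Ioi 0) (Set.Ioi 0))
    (hinv1 : ∀ r > 0, ψinv (r ^ 2 / (φ r) ^ 2) = r)
    (hinv2 : ∀ s > 0, (ψinv s) ^ 2 / (φ (ψinv s)) ^ 2 = s)
    (hinvpos : ∀ s > 0, 0 < ψinv s)
    (hint : ∫⁻ s in Set.Ioc (0 : ℝ) 1, ENNReal.ofReal ((φ (ψinv s)) ^ 2 / s) < ⊤)
    (K T : ℝ) (hK : 0 < K) (hT : 0 < T) :
    ∃ C : ℝ, ∀ t ∈ Set.Ioc (0 : ℝ) T,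
      ∫⁻ s in Set.Ioc (0 : ℝ) t,
        ENNReal.ofReal
          ((φ (ψinv (2 * K * ((1 - Real.exp (K * (s - t))) / K)))) ^ 2 /
            ((1 - Real.exp (K * (s - t))) / K)) ≤ ENNReal.ofReal C :=
  stmt3_general φ ψinv hφpos hφmono hψmono hinv2 hinvpos hint K T hK
end

section
/- Let K, c', T > 0. There exists a constant c > 0 such that for all t ∈ (0,T] and all w > 0, min{4, 2c'w²/t} + 2K·∫₀ᵗ min{4, 2c'w²/s}·e^{2K(t−s)} ds ≤ c·( t⁻¹ − log(min{1, w}) )·w². -/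
/-!
Bound the kernel `e^{2K(t-s)}` by `e^{2KT}`; the remaining integral of `min 4 (a/s)`, with
`a = 2c'w²`, is at most `4r + a log (t/r)` for any `0 < r ≤ t`, and the choice `r = min t (a/4)`
gives `a (1 + log⁺ (4t/a))`. Since `log (4t/a) ≤ |log (2T/c')| - 2 log (1 ∧ w)`, all terms are
absorbed into `c (t⁻¹ - log (1 ∧ w)) w²`, using `1 ≤ T/t` for the constant ones.
-/

open MeasureTheory Real Set

lemma intervalIntegrable_min_div {a b t : ℝ} (ha : 0 ≤ a) (hb : 0 ≤ b) (ht : 0 ≤ t) :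
    IntervalIntegrable (fun s => min b (a / s)) volume 0 t := by
  refine (intervalIntegrable_const (c := b)).mono_fun
    (measurable_const.min (measurable_const.div measurable_id)).aestronglyMeasurable ?_
  rw [uIoc_of_le ht]
  filter_upwards [ae_restrict_mem measurableSet_Ioc] with s hs
  rw [norm_of_nonneg (le_min hb (div_nonneg ha hs.1.le)), norm_of_nonneg hb]
  exact min_le_left _ _

lemma integral_min_div_le {a b r t : ℝ} (ha : 0 ≤ a) (hb : 0 ≤ b) (hr : 0 < r) (hrt : r ≤ t) :
    ∫ s in 0..t, min b (a / s) ≤ b * r + a * log (t / r) := by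
  have hf := intervalIntegrable_min_div ha hb (hr.le.trans hrt)
  have hf₁ : IntervalIntegrable (fun s => min b (a / s)) volume 0 r :=
    hf.mono_set (uIcc_subset_uIcc_left (by simp [uIcc_of_le (hr.le.trans hrt), hr.le, hrt]))
  have hf₂ : IntervalIntegrable (fun s => min b (a / s)) volume r t :=
    hf.mono_set (uIcc_subset_uIcc_right (by simp [uIcc_of_le (hr.le.trans hrt), hr.le, hrt]))
  have hinv : IntervalIntegrable (fun s => a * s⁻¹) volume r t := by
    refine (intervalIntegral.intervalIntegrable_inv (fun s hs => ?_) continuousOn_id).const_mul a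
    rw [uIcc_of_le hrt] at hs
    exact (hr.trans_le hs.1).ne'
  rw [← intervalIntegral.integral_add_adjacent_intervals hf₁ hf₂]
  gcongr
  · calc ∫ s in 0..r, min b (a / s) ≤ ∫ _ in 0..r, b :=
          intervalIntegral.integral_mono_on hr.le hf₁ intervalIntegrable_const
            fun s _ => min_le_left _ _
      _ = b * r := by simp [mul_comm]
  · calc ∫ s in r..t, min b (a / s) ≤ ∫ s in r..t, a * s⁻¹ :=
          intervalIntegral.integral_mono_on hrt hf₂ hinv fun s _ => min_le_right _ _
      _ = a * log (t / r) := by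
          rw [intervalIntegral.integral_const_mul, integral_inv_of_pos hr (hr.trans_le hrt)]

lemma integral_min_div_le_mul_one_add {a b t M : ℝ} (ha : 0 < a) (hb : 0 < b) (ht : 0 < t)
    (hM : 0 ≤ M) (hlog : log (b * t / a) ≤ M) :
    ∫ s in 0..t, min b (a / s) ≤ a * (1 + M) := by
  rcases le_or_gt t (a / b) with hta | hat
  · calc ∫ s in 0..t, min b (a / s) ≤ b * t + a * log (t / t) :=
          integral_min_div_le ha.le hb.le ht le_rfl
      _ ≤ a * (1 + M) := by
          rw [div_self ht.ne', log_one, mul_zero, add_zero]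
          nlinarith [(le_div_iff₀ hb).1 hta]
  · calc ∫ s in 0..t, min b (a / s) ≤ b * (a / b) + a * log (t / (a / b)) :=
          integral_min_div_le ha.le hb.le (div_pos ha hb) hat.le
      _ = a + a * log (b * t / a) := by
          rw [mul_div_cancel₀ _ hb.ne', div_div_eq_mul_div, mul_comm t b]
      _ ≤ a * (1 + M) := by rw [mul_one_add]; gcongr

lemma integral_mul_exp_le {f : ℝ → ℝ} {K t : ℝ} (hK : 0 ≤ K) (ht : 0 ≤ t)
    (hf : IntervalIntegrable f volume 0 t) (hf₀ : ∀ s ∈ Icc 0 t, 0 ≤ f s) :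
    ∫ s in 0..t, f s * exp (K * (t - s)) ≤ exp (K * t) * ∫ s in 0..t, f s := by
  rw [← intervalIntegral.integral_const_mul]
  refine intervalIntegral.integral_mono_on ht (hf.mul_continuousOn (by fun_prop))
    (hf.const_mul _) fun s hs => ?_
  rw [mul_comm]
  exact mul_le_mul_of_nonneg_right
    (exp_le_exp.2 (mul_le_mul_of_nonneg_left (by linarith [hs.1]) hK)) (hf₀ s hs)

lemma log_div_sq_le {x y w : ℝ} (hx : 0 < x) (hxy : x ≤ y) (hw : 0 < w) :
    log (x / w ^ 2) ≤ |log y| - 2 * log (min 1 w) := by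
  rw [log_div hx.ne' (by positivity), log_pow]
  have := log_le_log (lt_min one_pos hw) (min_le_right 1 w)
  have := log_le_log hx hxy
  push_cast
  linarith [le_abs_self (log y)]

/-- For `K, c', T > 0` there is `c > 0` such that for all `t ∈ (0,T]` and `w > 0`:
`min{4, 2c'w²/t} + 2K ∫₀ᵗ min{4, 2c'w²/s} e^{2K(t−s)} ds ≤ c (t⁻¹ − log(1 ∧ w)) w²`. -/
theorem stmt11 (K c' T : ℝ) (hK : 0 < K) (hc' : 0 < c') (hT : 0 < T) :
    ∃ c > (0 : ℝ), ∀ t ∈ Set.Ioc (0 : ℝ) T, ∀ w > (0 : ℝ),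
      min 4 (2 * c' * w ^ 2 / t) +
        2 * K * ∫ s in (0 : ℝ)..t, min 4 (2 * c' * w ^ 2 / s) * Real.exp (2 * K * (t - s))
      ≤ c * (t⁻¹ - Real.log (min 1 w)) * w ^ 2 := by
  set E := exp (2 * K * T)
  set D := |log (2 * T / c')|
  refine ⟨2 * c' + 4 * K * c' * E * ((1 + D) * T + 2), by positivity, ?_⟩
  rintro t ⟨ht, htT⟩ w hw
  set a := 2 * c' * w ^ 2 with ha_def
  have ha : 0 < a := by positivity
  obtain ⟨L, hL_def⟩ : ∃ L, L = -log (min 1 w) := ⟨_, rfl⟩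
  have hL : 0 ≤ L := hL_def ▸ neg_nonneg.2 (log_nonpos (lt_min one_pos hw).le (min_le_left _ _))
  have hlog : log (4 * t / a) ≤ D + 2 * L := by
    rw [show 4 * t / a = 2 * t / c' / w ^ 2 by rw [ha_def]; field_simp; ring, hL_def]
    linarith [log_div_sq_le (by positivity) (by gcongr : 2 * t / c' ≤ 2 * T / c') hw]
  have hint : ∫ s in 0..t, min 4 (a / s) * exp (2 * K * (t - s)) ≤ E * (a * (1 + (D + 2 * L))) :=
    calc ∫ s in 0..t, min 4 (a / s) * exp (2 * K * (t - s))
        ≤ exp (2 * K * t) * ∫ s in 0..t, min 4 (a / s) :=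
          integral_mul_exp_le (by positivity) ht.le (intervalIntegrable_min_div ha.le
            (by norm_num) ht.le) fun s hs => le_min (by norm_num) (div_nonneg ha.le hs.1)
      _ ≤ exp (2 * K * t) * (a * (1 + (D + 2 * L))) := by
          gcongr
          exact integral_min_div_le_mul_one_add ha (by norm_num) ht (by positivity) hlog
      _ ≤ E * (a * (1 + (D + 2 * L))) := by gcongr; exact exp_le_exp.2 (by gcongr)
  have hTt : 1 ≤ T * t⁻¹ := by rw [← div_eq_mul_inv, one_le_div ht]; exact htT
  have key : 1 + D + 2 * L ≤ ((1 + D) * T + 2) * (t⁻¹ + L) := by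
    have hD : 0 ≤ 1 + D := by positivity
    nlinarith [mul_nonneg hD (sub_nonneg.2 hTt), mul_nonneg (mul_nonneg hD hT.le) hL,
      inv_pos.2 ht]
  calc min 4 (a / t) + 2 * K * ∫ s in 0..t, min 4 (a / s) * exp (2 * K * (t - s))
      ≤ a * t⁻¹ + 2 * K * (E * (a * (1 + (D + 2 * L)))) := by
        gcongr
        exact (min_le_right _ _).trans_eq (div_eq_mul_inv _ _)
    _ ≤ a * (t⁻¹ + L) + 2 * K * E * a * (((1 + D) * T + 2) * (t⁻¹ + L)) := by
        nlinarith [mul_le_mul_of_nonneg_left key (by positivity : 0 ≤ 2 * K * E * a)]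
    _ = _ := by rw [hL_def, ha_def]; ring
end
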